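/- arXiv:2506.09328 — 2 statements merged into one kernel-verified Lean document; each statement's English description precedes it below -/
import Mathlib

section
/- Let f : U → R be locally Lipschitz on an open subset U of a Banach space E, let S ⊆ U be closed and convex, x ∈ S, and suppose f(x) = min_{x̃∈S} f(x̃). Then there exists ξ in the Clarke subdifferential ∂_C f(x) such that ⟨ξ, x̃ − x⟩ ≥ 0 for all x̃ ∈ S. -/
/- Clarke's multiplier rule: if `f` is locally Lipschitz on an open set `U` of a Banach
space, `S ⊆ U` is closed and convex, `x ∈ S`, and `f(x) = min_S f`, then there is
`ξ ∈ ∂_C f(x)` with `⟨ξ, x̃ − x⟩ ≥ 0` for all `x̃ ∈ S`. -/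

open Filter Topology

variable {E : Type*} [NormedAddCommGroup E] [NormedSpace ℝ E]

/-- The Clarke directional derivative. -/
noncomputable def clarkeDeriv (f : E → ℝ) (x v : E) : ℝ :=
  Filter.limsup (fun p : E × ℝ => (f (p.1 + p.2 • v) - f p.1) / p.2)
    ((𝓝 x) ×ˢ (𝓝[>] (0 : ℝ)))

/-- The Clarke subdifferential. -/
def clarkeSubdiff (f : E → ℝ) (x : E) : Set (E →L[ℝ] ℝ) :=
  {ξ | ∀ v : E, ξ v ≤ clarkeDeriv f x v}

/-! Near `x` the function `f` is `K`-Lipschitz, so `p := clarkeDeriv f x` is a sublinear functional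
bounded by `K * ‖v‖`, and minimality of `x` on the convex set `S` gives `0 ≤ p (y - x)` for `y ∈ S`.
The M. Riesz extension theorem, applied in `E × ℝ` to the cone `{(v, t) | ∃ c ∈ C, p (v + c) ≤ t}`
with `C` the cone spanned by `S - x`, produces a linear `ξ ≤ p` that is nonnegative on `S - x`;
the bound `ξ ≤ p ≤ K * ‖·‖` makes `ξ` continuous. -/

section Sublinear

variable {M : Type*} [AddCommGroup M] [Module ℝ M] {p : M → ℝ}

theorem map_zero_of_pos_homogeneous (hp_smul : ∀ c : ℝ, 0 < c → ∀ v, p (c • v) = c * p v) :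
    p 0 = 0 := by
  have h := hp_smul 2 two_pos 0
  rw [smul_zero] at h
  linarith

variable (hp_smul : ∀ c : ℝ, 0 < c → ∀ v, p (c • v) = c * p v)
  (hp_add : ∀ u v, p (u + v) ≤ p u + p v) (C : PointedCone ℝ M)

def shiftedEpigraphCone : PointedCone ℝ (M × ℝ) where
  carrier := {q | ∃ c ∈ C, p (q.1 + c) ≤ q.2}
  zero_mem' := ⟨0, C.zero_mem, by simp [map_zero_of_pos_homogeneous hp_smul]⟩
  add_mem' := by
    rintro ⟨u, t⟩ ⟨v, r⟩ ⟨c, hc, hu⟩ ⟨d, hd, hv⟩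
    refine ⟨c + d, C.add_mem hc hd, ?_⟩
    calc p (u + v + (c + d)) = p ((u + c) + (v + d)) := by abel_nf
      _ ≤ t + r := (hp_add _ _).trans (add_le_add hu hv)
  smul_mem' := by
    rintro a ⟨v, t⟩ ⟨c, hc, h⟩
    refine ⟨a • c, C.smul_mem a.2 hc, ?_⟩
    show p ((a : ℝ) • v + (a : ℝ) • c) ≤ (a : ℝ) * t
    rcases a.2.eq_or_lt with ha | ha
    · simp [← ha, map_zero_of_pos_homogeneous hp_smul]
    · rw [← smul_add, hp_smul _ ha]
      exact mul_le_mul_of_nonneg_left h ha.le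

include hp_smul hp_add in
theorem exists_linearMap_le_and_nonneg_on_pointedCone (hpC : ∀ c ∈ C, 0 ≤ p c) :
    ∃ g : M →ₗ[ℝ] ℝ, (∀ v, g v ≤ p v) ∧ ∀ c ∈ C, 0 ≤ g c := by
  set s := shiftedEpigraphCone hp_smul hp_add C
  let φ : M × ℝ →ₗ.[ℝ] ℝ := (LinearMap.toPMap 0 ⊥).coprod (LinearMap.id.toPMap ⊤)
  have hφ_nonneg : ∀ q : φ.domain, (q : M × ℝ) ∈ s → 0 ≤ φ q := by
    rintro ⟨⟨v, t⟩, hv⟩ ⟨c, hc, h⟩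
    obtain rfl : v = 0 := (Submodule.mem_bot ℝ).1 hv.1
    simpa [φ] using (hpC c hc).trans (by simpa using h)
  have hφ_dense : ∀ q : M × ℝ, ∃ r : φ.domain, (r : M × ℝ) + q ∈ s := by
    rintro ⟨v, t⟩
    exact ⟨⟨(0, p v - t), (⊥ : Submodule ℝ M).zero_mem, trivial⟩, 0, C.zero_mem, by simp⟩
  -- `G (v, t) = t - g v`, and `G ≥ 0` at `(v, p v)` and at `(-c, 0)` gives the two claims
  obtain ⟨G, hG_eq, hG_nonneg⟩ := riesz_extension s φ hφ_nonneg hφ_dense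
  have hG_snd : ∀ t : ℝ, G (0, t) = t := fun t ↦
    (hG_eq ⟨(0, t), (⊥ : Submodule ℝ M).zero_mem, trivial⟩).trans (by simp [φ])
  refine ⟨-G.comp (LinearMap.inl ℝ M ℝ), fun v ↦ ?_, fun c hc ↦ ?_⟩
  · have h : 0 ≤ G (v, p v) := hG_nonneg _ ⟨0, C.zero_mem, by simp⟩
    have hsplit : G (v, p v) = G (v, 0) + p v := by
      simpa [hG_snd] using map_add G (v, 0) (0, p v)
    simp only [LinearMap.neg_apply, LinearMap.comp_apply, LinearMap.inl_apply]
    linarith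
  · have h : 0 ≤ G (-c, 0) :=
      hG_nonneg _ ⟨c, hc, by simp [map_zero_of_pos_homogeneous hp_smul]⟩
    rw [← neg_zero, ← Prod.neg_mk, map_neg] at h
    simpa using h

include hp_smul hp_add in
theorem exists_linearMap_le_and_nonneg_on_sub {S : Set M} (hS : Convex ℝ S) {x : M} (hx : x ∈ S)
    (hpS : ∀ y ∈ S, 0 ≤ p (y - x)) :
    ∃ g : M →ₗ[ℝ] ℝ, (∀ v, g v ≤ p v) ∧ ∀ y ∈ S, 0 ≤ g (y - x) := by
  set T := (· - x) '' S
  have hT : Convex ℝ T := by simpa [T, sub_eq_neg_add] using hS.translate (-x)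
  have hxT : ∀ y ∈ S, y - x ∈ ConvexCone.hull ℝ T :=
    fun y hy ↦ ConvexCone.subset_hull ⟨y, hy, rfl⟩
  have hpC : ∀ w ∈ ConvexCone.hull ℝ T, 0 ≤ p w := by
    intro w hw
    obtain ⟨r, hr, _, ⟨y, hy, rfl⟩, rfl⟩ := (ConvexCone.mem_hull_of_convex hT).1 hw
    rw [hp_smul r hr]
    exact mul_nonneg hr.le (hpS y hy)
  obtain ⟨g, hg_le, hg_nonneg⟩ := exists_linearMap_le_and_nonneg_on_pointedCone hp_smul hp_add
    ((ConvexCone.hull ℝ T).toPointedCone (by simpa [ConvexCone.Pointed] using hxT x hx)) hpC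
  exact ⟨g, hg_le, fun y hy ↦ hg_nonneg _ (hxT y hy)⟩

end Sublinear

theorem LinearMap.norm_apply_le_of_apply_le {F : Type*} [SeminormedAddCommGroup F]
    [Module ℝ F] (g : F →ₗ[ℝ] ℝ) {C : ℝ} (h : ∀ v, g v ≤ C * ‖v‖) (v : F) : ‖g v‖ ≤ C * ‖v‖ := by
  have hneg := h (-v)
  rw [map_neg, norm_neg] at hneg
  exact abs_le.2 ⟨by linarith, h v⟩

namespace Filter.Eventually

variable {ι : Type*} {l : Filter ι} {u : ι → ℝ} {C : ℝ}

theorem isBoundedUnder_le_of_abs_le (h : ∀ᶠ i in l, |u i| ≤ C) :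
    IsBoundedUnder (· ≤ ·) l u :=
  isBoundedUnder_of_eventually_le (h.mono fun _ hi ↦ (abs_le.1 hi).2)

theorem isBoundedUnder_ge_of_abs_le (h : ∀ᶠ i in l, |u i| ≤ C) :
    IsBoundedUnder (· ≥ ·) l u :=
  isBoundedUnder_of_eventually_ge (h.mono fun _ hi ↦ (abs_le.1 hi).1)

theorem isCoboundedUnder_le_of_abs_le [l.NeBot] (h : ∀ᶠ i in l, |u i| ≤ C) :
    IsCoboundedUnder (· ≤ ·) l u :=
  isCoboundedUnder_le_of_eventually_le l (h.mono fun _ hi ↦ (abs_le.1 hi).1)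

end Filter.Eventually

theorem limsup_comp_le_of_tendsto {α : Type*} {l : Filter α} [l.NeBot] {m : α → α}
    (hm : Tendsto m l l) {u : α → ℝ} {C : ℝ} (hu : ∀ᶠ a in l, |u a| ≤ C) :
    limsup (u ∘ m) l ≤ limsup u l := by
  rw [limsup_comp]
  exact limsup_le_limsup_of_le hm (Eventually.isCoboundedUnder_le_of_abs_le (hm.eventually hu))
    hu.isBoundedUnder_le_of_abs_le

noncomputable def clarkeQuotient (f : E → ℝ) (v : E) (p : E × ℝ) : ℝ :=
  (f (p.1 + p.2 • v) - f p.1) / p.2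

theorem clarkeDeriv_eq_limsup (f : E → ℝ) (x v : E) :
    clarkeDeriv f x v = limsup (clarkeQuotient f v) (𝓝 x ×ˢ 𝓝[>] 0) := rfl

theorem tendsto_fst_add_snd_smul (x v : E) :
    Tendsto (fun p : E × ℝ ↦ p.1 + p.2 • v) (𝓝 x ×ˢ 𝓝[>] 0) (𝓝 x) := by
  have hτ : Tendsto (fun p : E × ℝ ↦ p.2) (𝓝 x ×ˢ 𝓝[>] 0) (𝓝 0) :=
    tendsto_snd.mono_right nhdsWithin_le_nhds
  simpa using tendsto_fst.add (hτ.smul_const v)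

theorem eventually_pos_snd {α : Type*} [TopologicalSpace α] (a : α) :
    ∀ᶠ p : α × ℝ in 𝓝 a ×ˢ 𝓝[>] 0, 0 < p.2 :=
  tendsto_snd self_mem_nhdsWithin

section Lipschitz

variable {f : E → ℝ} {x : E} {K : NNReal} {V : Set E} (hV : V ∈ 𝓝 x) (hf : LipschitzOnWith K f V)
include hV hf

theorem eventually_abs_clarkeQuotient_le (v : E) :
    ∀ᶠ p in 𝓝 x ×ˢ 𝓝[>] 0, |clarkeQuotient f v p| ≤ K * ‖v‖ := by
  filter_upwards [tendsto_fst hV, tendsto_fst_add_snd_smul x v hV, eventually_pos_snd x]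
    with p hp hpv (hτ : 0 < p.2)
  rw [clarkeQuotient, abs_div, abs_of_pos hτ, div_le_iff₀ hτ, ← Real.dist_eq]
  calc dist (f (p.1 + p.2 • v)) (f p.1) ≤ K * dist (p.1 + p.2 • v) p.1 := hf.dist_le_mul _ hpv _ hp
    _ = K * ‖v‖ * p.2 := by
      rw [dist_eq_norm, add_sub_cancel_left, norm_smul, Real.norm_of_nonneg hτ.le]; ring

theorem clarkeDeriv_le (v : E) : clarkeDeriv f x v ≤ K * ‖v‖ :=
  limsup_le_of_le (eventually_abs_clarkeQuotient_le hV hf v).isCoboundedUnder_le_of_abs_le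
    ((eventually_abs_clarkeQuotient_le hV hf v).mono fun _ h ↦ (abs_le.1 h).2)

theorem clarkeDeriv_add_le (u v : E) :
    clarkeDeriv f x (u + v) ≤ clarkeDeriv f x u + clarkeDeriv f x v := by
  let m : E × ℝ → E × ℝ := fun p ↦ (p.1 + p.2 • v, p.2)
  have hm : Tendsto m (𝓝 x ×ˢ 𝓝[>] 0) (𝓝 x ×ˢ 𝓝[>] 0) :=
    (tendsto_fst_add_snd_smul x v).prodMk tendsto_snd
  have hu := eventually_abs_clarkeQuotient_le hV hf u
  have hv := eventually_abs_clarkeQuotient_le hV hf v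
  have hum := hm.eventually hu
  -- the quotient in direction `u + v` telescopes through the point `p.1 + p.2 • v`
  have hsplit : clarkeQuotient f (u + v) = clarkeQuotient f u ∘ m + clarkeQuotient f v := by
    ext p
    simp only [clarkeQuotient, Function.comp_apply, Pi.add_apply, m, ← add_div, smul_add,
      add_assoc, add_comm (p.2 • u)]
    ring_nf
  calc clarkeDeriv f x (u + v)
      ≤ limsup (clarkeQuotient f u ∘ m) (𝓝 x ×ˢ 𝓝[>] 0) + clarkeDeriv f x v := by
        rw [clarkeDeriv_eq_limsup, hsplit]
        exact limsup_add_le hum.isBoundedUnder_ge_of_abs_le hum.isBoundedUnder_le_of_abs_le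
          hv.isCoboundedUnder_le_of_abs_le hv.isBoundedUnder_le_of_abs_le
    _ ≤ clarkeDeriv f x u + clarkeDeriv f x v := by
        grw [limsup_comp_le_of_tendsto hm hu]; rfl

theorem clarkeDeriv_smul_le {c : ℝ} (hc : 0 < c) (v : E) :
    clarkeDeriv f x (c • v) ≤ c * clarkeDeriv f x v := by
  let m : E × ℝ → E × ℝ := fun p ↦ (p.1, c * p.2)
  have hm : Tendsto m (𝓝 x ×ˢ 𝓝[>] 0) (𝓝 x ×ˢ 𝓝[>] 0) := by
    refine tendsto_fst.prodMk (tendsto_nhdsWithin_iff.2 ⟨?_, ?_⟩)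
    · have hτ : Tendsto (fun p : E × ℝ ↦ p.2) (𝓝 x ×ˢ 𝓝[>] 0) (𝓝 0) :=
        tendsto_snd.mono_right nhdsWithin_le_nhds
      simpa using hτ.const_mul c
    · exact (eventually_pos_snd x).mono fun p hp ↦ mul_pos hc hp
  have hv := eventually_abs_clarkeQuotient_le hV hf v
  have hvm := hm.eventually hv
  have hcvm : ∀ᶠ p in 𝓝 x ×ˢ 𝓝[>] 0, |c * clarkeQuotient f v (m p)| ≤ c * (K * ‖v‖) :=
    hvm.mono fun p h ↦ by rw [abs_mul, abs_of_pos hc]; gcongr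
  -- a step `τ` in direction `c • v` is a step `c * τ` in direction `v`
  have hscale : clarkeQuotient f (c • v) = fun p ↦ c * clarkeQuotient f v (m p) := by
    ext p
    simp only [clarkeQuotient, m, smul_smul, mul_comm p.2 c]
    field_simp
  calc clarkeDeriv f x (c • v) = c * limsup (clarkeQuotient f v ∘ m) (𝓝 x ×ˢ 𝓝[>] 0) := by
        rw [clarkeDeriv_eq_limsup, hscale]
        exact ((OrderIso.mulLeft₀ c hc).limsup_apply hvm.isBoundedUnder_le_of_abs_le
          hvm.isCoboundedUnder_le_of_abs_le hcvm.isBoundedUnder_le_of_abs_le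
          hcvm.isCoboundedUnder_le_of_abs_le).symm
    _ ≤ c * clarkeDeriv f x v := by grw [limsup_comp_le_of_tendsto hm hv]; rfl

theorem clarkeDeriv_smul {c : ℝ} (hc : 0 < c) (v : E) :
    clarkeDeriv f x (c • v) = c * clarkeDeriv f x v := by
  refine (clarkeDeriv_smul_le hV hf hc v).antisymm ?_
  calc c * clarkeDeriv f x v = c * clarkeDeriv f x (c⁻¹ • c • v) := by
        rw [inv_smul_smul₀ hc.ne']
    _ ≤ c * (c⁻¹ * clarkeDeriv f x (c • v)) := by
        gcongr; exact clarkeDeriv_smul_le hV hf (inv_pos.2 hc) _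
    _ = clarkeDeriv f x (c • v) := by field_simp

theorem clarkeDeriv_nonneg_of_eventually_le {v : E}
    (hmin : ∀ᶠ τ in 𝓝[>] (0 : ℝ), f x ≤ f (x + τ • v)) : 0 ≤ clarkeDeriv f x v := by
  have hx : Tendsto (fun τ : ℝ ↦ (x, τ)) (𝓝[>] 0) (𝓝 x ×ˢ 𝓝[>] 0) :=
    tendsto_const_nhds.prodMk tendsto_id
  refine le_limsup_of_frequently_le (hx.frequently ?_)
    (eventually_abs_clarkeQuotient_le hV hf v).isBoundedUnder_le_of_abs_le
  refine (hmin.and self_mem_nhdsWithin).frequently.mono fun τ ⟨hτ, (hτ0 : 0 < τ)⟩ ↦ ?_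
  exact div_nonneg (sub_nonneg.2 hτ) hτ0.le

end Lipschitz

theorem clarke_multiplier_rule_general (U : Set E) (f : E → ℝ)
    (hf : ∀ y ∈ U, ∃ (K : NNReal) (V : Set E), V ∈ 𝓝 y ∧ LipschitzOnWith K f V)
    (S : Set E) (hSU : S ⊆ U) (hScv : Convex ℝ S)
    (x : E) (hx : x ∈ S) (hmin : ∀ y ∈ S, f x ≤ f y) :
    ∃ ξ ∈ clarkeSubdiff f x, ∀ y ∈ S, 0 ≤ ξ (y - x) := by
  obtain ⟨K, V, hV, hfV⟩ := hf x (hSU hx)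
  have hdir : ∀ y ∈ S, 0 ≤ clarkeDeriv f x (y - x) := fun y hy ↦
    clarkeDeriv_nonneg_of_eventually_le hV hfV <| by
      filter_upwards [Ioc_mem_nhdsGT one_pos] with τ hτ
      exact hmin _ (hScv.add_smul_sub_mem hx hy (Set.Ioc_subset_Icc_self hτ))
  obtain ⟨g, hg_le, hg_nonneg⟩ := exists_linearMap_le_and_nonneg_on_sub
    (fun _ hc ↦ clarkeDeriv_smul hV hfV hc) (clarkeDeriv_add_le hV hfV) hScv hx hdir
  have hg_norm := g.norm_apply_le_of_apply_le fun v ↦ (hg_le v).trans (clarkeDeriv_le hV hfV v)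
  exact ⟨g.mkContinuous K hg_norm, hg_le, hg_nonneg⟩

theorem clarke_multiplier_rule [CompleteSpace E] (U : Set E) (hU : IsOpen U) (f : E → ℝ)
    (hf : ∀ y ∈ U, ∃ (K : NNReal) (V : Set E), V ∈ 𝓝 y ∧ LipschitzOnWith K f V)
    (S : Set E) (hSU : S ⊆ U) (hScl : IsClosed S) (hScv : Convex ℝ S)
    (x : E) (hx : x ∈ S) (hmin : ∀ y ∈ S, f x ≤ f y) :
    ∃ ξ ∈ clarkeSubdiff f x, ∀ y ∈ S, 0 ≤ ξ (y - x) :=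
  clarke_multiplier_rule_general U f hf S hSU hScv x hx hmin
end

section
/- Let p ∈ M be an unstable point for a sequence of measures {μₑ} with λ_k(μₑ) ≡ 1. Then, after passing to a subsequence, there exist a neighborhood Ω of p and radii rₑ → 0 such that ind(μₑ, Ω \ closure(B_{rₑ}(p))) = 0 for all ε. -/
open MeasureTheory Filter Topology
open scoped Manifold

noncomputable section

/-- Euclidean model space. -/
abbrev Euc (m : ℕ) := EuclideanSpace ℝ (Fin m)

/-- The squared Riemannian norm `|dφ|²_g(x)` of the differential of `φ` at `x`,
computed from the (inverse) metric `gInv` acting on cotangent vectors via the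
Euclidean identification of tangent spaces. -/
def gradSqG {m : ℕ} {M : Type*} [TopologicalSpace M] [ChartedSpace (Euc m) M]
    (gInv : M → Euc m →L[ℝ] Euc m) (φ : M → ℝ) (x : M) : ℝ :=
  (mfderiv (𝓡 m) 𝓘(ℝ, ℝ) φ x : Euc m →L[ℝ] ℝ)
    (gInv x ((InnerProductSpace.toDual ℝ (Euc m)).symm
      (mfderiv (𝓡 m) 𝓘(ℝ, ℝ) φ x : Euc m →L[ℝ] ℝ)))

/-- `φ ∈ C^∞(M)`. -/
def SmoothFn (m : ℕ) {M : Type*} [TopologicalSpace M] [ChartedSpace (Euc m) M] (φ : M → ℝ) : Prop :=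
  ContMDiff (𝓡 m) 𝓘(ℝ, ℝ) (⊤ : ℕ∞) φ

/-- The quadratic form `Q_μ(φ) = ∫ |dφ|²_g dv_g − ∫ φ² dμ`. -/
def Qform {m : ℕ} {M : Type*} [TopologicalSpace M] [ChartedSpace (Euc m) M] [MeasurableSpace M]
    (vol μ : Measure M) (gInv : M → Euc m →L[ℝ] Euc m) (φ : M → ℝ) : ℝ :=
  (∫ x, gradSqG gInv φ x ∂vol) - ∫ x, (φ x) ^ 2 ∂μ

/-- `ind(μ, Ω) = 0`: the form `Q_μ` is nonnegative on `C₀^∞(Ω)`. -/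
def IndexZero {m : ℕ} {M : Type*} [TopologicalSpace M] [ChartedSpace (Euc m) M] [MeasurableSpace M]
    (vol μ : Measure M) (gInv : M → Euc m →L[ℝ] Euc m) (Ω : Set M) : Prop :=
  ∀ φ : M → ℝ, SmoothFn m φ → tsupport φ ⊆ Ω → 0 ≤ Qform vol μ gInv φ

/-- The variational eigenvalue
`λ_k(μ) = inf_{F_{k+1} ⊂ C^∞(M)} sup_{φ ∈ F_{k+1}} (∫|dφ|²_g dv_g)/(∫φ² dμ)`. -/
def lambdaK {m : ℕ} {M : Type*} [TopologicalSpace M] [ChartedSpace (Euc m) M] [MeasurableSpace M]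
    (vol : Measure M) (gInv : M → Euc m →L[ℝ] Euc m) (k : ℕ) (μ : Measure M) : ℝ :=
  sInf {r : ℝ | ∃ F : Submodule ℝ (M → ℝ), Module.finrank ℝ F = k + 1 ∧
    (∀ φ ∈ F, SmoothFn m φ) ∧
    r = sSup {s : ℝ | ∃ φ ∈ F,
      s = (∫ x, gradSqG gInv φ x ∂vol) / ∫ x, (φ x) ^ 2 ∂μ}}

/-- Weak-* convergence of measures (testing against continuous functions). -/
def WeakStarMeas {M : Type*} [TopologicalSpace M] [MeasurableSpace M]
    (μs : ℕ → Measure M) (μ : Measure M) : Prop :=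
  ∀ f : M → ℝ, Continuous f →
    Tendsto (fun n => ∫ x, f x ∂(μs n)) atTop (𝓝 (∫ x, f x ∂μ))

/-- `p` is a stable point for the sequence `{μₑ}`: some neighborhood `Ω` of `p` has
`ind(μₑ, Ω) = 0` along a subsequence. -/
def StablePt {m : ℕ} {M : Type*} [TopologicalSpace M] [ChartedSpace (Euc m) M] [MeasurableSpace M]
    (vol : Measure M) (gInv : M → Euc m →L[ℝ] Euc m) (μs : ℕ → Measure M) (p : M) : Prop :=
  ∃ Ω : Set M, IsOpen Ω ∧ p ∈ Ω ∧
    ∃ ψ : ℕ → ℕ, StrictMono ψ ∧ ∀ j, IndexZero vol (μs (ψ j)) gInv Ω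

end

/-!
If the conclusion failed, then inside every ball `B_s(p)` there would be a smaller radius `s'`
such that, for all large `n`, the form `Q_{μₙ}` is negative on a test function supported in the
annulus `B_s(p) \ closure B_{s'}(p)`. Iterating gives `k + 1` pairwise disjoint annuli, each
carrying a negative direction for one and the same large `n`. Disjointly supported test functions
are orthogonal for both `∫ |dφ|² dv` and `∫ φ² dμ`, so their span is a `(k + 1)`-dimensional space
on which the Rayleigh quotient stays below some `t < 1`, forcing `λ_k(μₙ) < 1`.
-/

open MeasureTheory Filter Topology Set Metric Function
open scoped Manifold

section Support

variable {X ι R : Type*} [TopologicalSpace X]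

theorem exists_forall_ne_notMem_tsupport [Nonempty ι] [Zero R] {φ : ι → X → R}
    (hdisj : Pairwise (Disjoint on fun i => tsupport (φ i))) (x : X) :
    ∃ i, ∀ j, j ≠ i → x ∉ tsupport (φ j) := by
  by_cases h : ∃ i, x ∈ tsupport (φ i)
  · obtain ⟨i, hi⟩ := h
    exact ⟨i, fun j hj hxj => disjoint_left.mp (hdisj hj) hxj hi⟩
  · push Not at h
    exact ⟨Classical.arbitrary ι, fun j _ => h j⟩

theorem sum_smul_eventuallyEq_of_forall_ne_notMem_tsupport [Fintype ι] [Semiring R]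
    {φ : ι → X → R} (c : ι → R) {x : X} {i : ι} (hi : ∀ j, j ≠ i → x ∉ tsupport (φ j)) :
    ∑ j, c j • φ j =ᶠ[𝓝 x] c i • φ i := by
  have hzero : ∀ᶠ y in 𝓝 x, ∀ j, j ≠ i → φ j y = 0 := by
    refine eventually_all.2 fun j => ?_
    rcases eq_or_ne j i with rfl | hj
    · exact .of_forall fun _ h => (h rfl).elim
    · exact (notMem_tsupport_iff_eventuallyEq.1 (hi j hj)).mono fun _ hy _ => hy
  filter_upwards [hzero] with y hy
  simp only [Finset.sum_apply, Pi.smul_apply]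
  exact Finset.sum_eq_single_of_mem i (Finset.mem_univ i) fun j _ hj => by rw [hy j hj, smul_zero]

theorem linearIndependent_of_pairwise_disjoint_tsupport [Fintype ι] [Ring R] [NoZeroDivisors R]
    {φ : ι → X → R} (hne : ∀ i, φ i ≠ 0)
    (hdisj : Pairwise (Disjoint on fun i => tsupport (φ i))) : LinearIndependent R φ := by
  refine Fintype.linearIndependent_iff.2 fun c hc i => ?_
  obtain ⟨x, hx⟩ := Function.ne_iff.1 (hne i)
  have hi : ∀ j, j ≠ i → x ∉ tsupport (φ j) := fun j hj hxj =>
    disjoint_left.mp (hdisj hj) hxj (subset_tsupport _ hx)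
  have := (sum_smul_eventuallyEq_of_forall_ne_notMem_tsupport c hi).eq_of_nhds
  rw [hc] at this
  exact (mul_eq_zero.1 this.symm).resolve_right hx

end Support

section Integral

variable {X ι : Type*} [MeasurableSpace X] [Fintype ι] {S : ι → Set X}

theorem integral_sum_of_pairwise_disjoint {μ : Measure X} {f : ι → X → ℝ}
    (hS : ∀ i, MeasurableSet (S i)) (hdisj : Pairwise (Disjoint on S))
    (hf : ∀ i, ∀ x ∉ S i, f i x = 0) (hint : Integrable (fun x => ∑ i, f i x) μ) :
    ∫ x, ∑ i, f i x ∂μ = ∑ i, ∫ x, f i x ∂μ := by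
  refine integral_finsetSum _ fun i _ => ?_
  have hfi : f i = (S i).indicator fun x => ∑ j, f j x := by
    funext x
    by_cases hx : x ∈ S i
    · rw [indicator_of_mem hx, Finset.sum_eq_single_of_mem i (Finset.mem_univ i)
        fun j _ hj => hf j x fun hxj => disjoint_left.mp (hdisj hj) hxj hx]
    · rw [indicator_of_notMem hx, hf i x hx]
  rw [hfi]
  exact hint.indicator (hS i)

theorem integral_sum_div_integral_sum_le {ν μ : Measure X} {f h : ι → X → ℝ} {t : ℝ}
    (hS : ∀ i, MeasurableSet (S i)) (hdisj : Pairwise (Disjoint on S))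
    (hf : ∀ i, ∀ x ∉ S i, f i x = 0) (hh : ∀ i, ∀ x ∉ S i, h i x = 0)
    (hh0 : ∀ i x, 0 ≤ h i x) (ht : 0 ≤ t) (hfh : ∀ i, ∫ x, f i x ∂ν ≤ t * ∫ x, h i x ∂μ) :
    (∫ x, ∑ i, f i x ∂ν) / ∫ x, ∑ i, h i x ∂μ ≤ t := by
  by_cases hhi : Integrable (fun x => ∑ i, h i x) μ
  swap
  · rw [integral_undef hhi, div_zero]
    exact ht
  have hden : 0 ≤ ∫ x, ∑ i, h i x ∂μ :=
    integral_nonneg fun x => Finset.sum_nonneg fun i _ => hh0 i x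
  refine div_le_of_le_mul₀ hden ht ?_
  by_cases hfi : Integrable (fun x => ∑ i, f i x) ν
  swap
  · rw [integral_undef hfi]
    exact mul_nonneg ht hden
  rw [integral_sum_of_pairwise_disjoint hS hdisj hf hfi,
    integral_sum_of_pairwise_disjoint hS hdisj hh hhi, Finset.mul_sum]
  exact Finset.sum_le_sum fun i _ => hfh i

end Integral

theorem exists_lt_one_forall_le_mul {ι : Type*} [Finite ι] {A B : ι → ℝ}
    (hB : ∀ i, 0 ≤ B i) (hAB : ∀ i, A i < B i) :
    ∃ t, 0 ≤ t ∧ t < 1 ∧ ∀ i, A i ≤ t * B i := by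
  rcases isEmpty_or_nonempty ι with hι | hι
  · exact ⟨0, le_rfl, one_pos, fun i => isEmptyElim i⟩
  have hone : ∀ i, ∃ s, 0 ≤ s ∧ s < 1 ∧ A i ≤ s * B i := fun i => by
    rcases (hB i).eq_or_lt with hBi | hBi
    · exact ⟨0, le_rfl, one_pos, by linarith [hAB i]⟩
    · exact ⟨max 0 (A i / B i), le_max_left _ _,
        max_lt one_pos ((div_lt_one hBi).2 (hAB i)), (div_le_iff₀ hBi).1 (le_max_right _ _)⟩
  choose s hs0 hs1 hsAB using hone
  obtain ⟨i₀, hi₀⟩ := Finite.exists_max s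
  exact ⟨s i₀, hs0 i₀, hs1 i₀, fun i =>
    (hsAB i).trans (mul_le_mul_of_nonneg_right (hi₀ i) (hB i))⟩

theorem exists_pairwise_disjoint_eventually_of_annuli {X α : Type*} [PseudoMetricSpace X]
    {l : Filter α} {P : α → Set X → Prop} (hP : ∀ a U V, U ⊆ V → P a U → P a V) (x : X)
    (h : ∀ s > 0, ∃ s' > 0, ∀ᶠ a in l, P a (ball x s \ closure (ball x s'))) (J : ℕ) :
    ∃ U : Fin J → Set X, Pairwise (Disjoint on U) ∧ ∀ᶠ a in l, ∀ i, P a (U i) := by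
  choose! next hnext hev using h
  set r : ℕ → ℝ := fun n => (fun s => min (next s) (s / 2))^[n] 1
  have hr_succ : ∀ n, r (n + 1) = min (next (r n)) (r n / 2) := fun n =>
    Function.iterate_succ_apply' _ _ _
  have hr_pos : ∀ n, 0 < r n := fun n => by
    induction n with
    | zero => exact one_pos
    | succ n ih => rw [hr_succ]; exact lt_min (hnext _ ih) (half_pos ih)
  have hr_anti : Antitone r := antitone_nat_of_succ_le fun n => by
    rw [hr_succ]; exact (min_le_right _ _).trans (half_le_self (hr_pos n).le)
  refine ⟨fun i => ball x (r i) \ closure (ball x (r (i + 1))), ?_, eventually_all.2 fun i => ?_⟩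
  · refine (pairwise_disjoint_on _).2 fun i j hij => disjoint_left.2 fun y hyi hyj => hyi.2 ?_
    exact subset_closure (ball_subset_ball (hr_anti (Nat.succ_le_of_lt hij)) hyj.1)
  · refine (hev _ (hr_pos i)).mono fun a ha => hP a _ _ ?_ ha
    dsimp only
    rw [hr_succ]
    exact sdiff_subset_sdiff_right (closure_mono (ball_subset_ball (min_le_left _ _)))

theorem exists_strictMono_tendsto_zero_of_frequently {P : ℕ → ℝ → Prop}
    (h : ∀ s > 0, ∃ᶠ n in atTop, P n s) :
    ∃ ψ : ℕ → ℕ, StrictMono ψ ∧ ∃ r : ℕ → ℝ, (∀ j, 0 < r j) ∧ Tendsto r atTop (𝓝 0) ∧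
      ∀ j, P (ψ j) (r j) := by
  obtain ⟨ψ, hψ, hP⟩ := extraction_forall_of_frequently fun j : ℕ => h (1 / ((j : ℝ) + 1))
    Nat.one_div_pos_of_nat
  exact ⟨ψ, hψ, _, fun _ => Nat.one_div_pos_of_nat, tendsto_one_div_add_atTop_nhds_zero_nat, hP⟩

theorem smul_apply_toDual_symm_smul {E : Type*} [NormedAddCommGroup E] [InnerProductSpace ℝ E]
    [CompleteSpace E] (A : E →L[ℝ] E) (c : ℝ) (T : E →L[ℝ] ℝ) :
    (c • T) (A ((InnerProductSpace.toDual ℝ E).symm (c • T)))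
      = c ^ 2 * T (A ((InnerProductSpace.toDual ℝ E).symm T)) := by
  simp only [smul_apply, map_smul, smul_eq_mul]
  ring

section Gradient

variable {m : ℕ} {M : Type*} [TopologicalSpace M] [ChartedSpace (Euc m) M]
  (gInv : M → Euc m →L[ℝ] Euc m)

/-- Typing the differential in `Euc m →L[ℝ] ℝ` decouples it from the tangent space at `φ x`,
so that `mfderiv` can be rewritten across different functions. -/
theorem gradSqG_eq_apply_mfderiv (φ : M → ℝ) (x : M) :
    gradSqG gInv φ x = (fun T : Euc m →L[ℝ] ℝ =>
      T (gInv x ((InnerProductSpace.toDual ℝ (Euc m)).symm T))) (mfderiv (𝓡 m) 𝓘(ℝ, ℝ) φ x) :=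
  rfl

theorem gradSqG_congr {φ ψ : M → ℝ} {x : M} (h : φ =ᶠ[𝓝 x] ψ) :
    gradSqG gInv φ x = gradSqG gInv ψ x := by
  rw [gradSqG_eq_apply_mfderiv, gradSqG_eq_apply_mfderiv, h.mfderiv_eq]

theorem gradSqG_eq_zero_of_notMem_tsupport {φ : M → ℝ} {x : M} (hx : x ∉ tsupport φ) :
    gradSqG gInv φ x = 0 := by
  have h0 : mfderiv (𝓡 m) 𝓘(ℝ, ℝ) (0 : M → ℝ) x = 0 := mfderiv_const
  rw [gradSqG_congr gInv (notMem_tsupport_iff_eventuallyEq.1 hx), gradSqG_eq_apply_mfderiv, h0]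
  rfl

theorem gradSqG_const_smul {φ : M → ℝ} {x : M} (hφ : MDifferentiableAt (𝓡 m) 𝓘(ℝ, ℝ) φ x)
    (c : ℝ) : gradSqG gInv (c • φ) x = c ^ 2 * gradSqG gInv φ x := by
  rw [gradSqG_eq_apply_mfderiv, gradSqG_eq_apply_mfderiv, const_smul_mfderiv hφ]
  exact smul_apply_toDual_symm_smul (gInv x) c _

end Gradient

section Rayleigh

variable {m : ℕ} {M : Type*} [TopologicalSpace M] [ChartedSpace (Euc m) M]

theorem SmoothFn.of_mem_span {s : Set (M → ℝ)} (hs : ∀ φ ∈ s, SmoothFn m φ) {ψ : M → ℝ}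
    (hψ : ψ ∈ Submodule.span ℝ s) : SmoothFn m ψ :=
  Submodule.span_induction hs contMDiff_const (fun _ _ _ _ hf hg => hf.add hg)
    (fun c _ _ hf => (contMDiff_const (I' := 𝓘(ℝ, ℝ)) (c := c)).smul hf) hψ

variable [MeasurableSpace M] {vol μ : Measure M} {gInv : M → Euc m →L[ℝ] Euc m}

theorem Qform_zero : Qform vol μ gInv 0 = 0 := by
  have h0 : ∀ x, gradSqG gInv (0 : M → ℝ) x = 0 := fun x =>
    gradSqG_eq_zero_of_notMem_tsupport gInv (by simp)
  simp [Qform, h0]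

theorem IndexZero.mono {Ω Ω' : Set M} (h : IndexZero vol μ gInv Ω) (hΩ : Ω' ⊆ Ω) :
    IndexZero vol μ gInv Ω' :=
  fun φ hφ hsupp => h φ hφ (hsupp.trans hΩ)

theorem lambdaK_le_of_finrank_eq {k : ℕ} {t : ℝ} (F : Submodule ℝ (M → ℝ))
    (hF : Module.finrank ℝ F = k + 1) (hsm : ∀ φ ∈ F, SmoothFn m φ)
    (ht : ∀ φ ∈ F, (∫ x, gradSqG gInv φ x ∂vol) / ∫ x, φ x ^ 2 ∂μ ≤ t) :
    lambdaK vol gInv k μ ≤ t := by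
  let R : Submodule ℝ (M → ℝ) → Set ℝ := fun F =>
    {s | ∃ φ ∈ F, s = (∫ x, gradSqG gInv φ x ∂vol) / ∫ x, φ x ^ 2 ∂μ}
  have hzero : ∀ F, (0 : ℝ) ∈ R F := fun F => ⟨0, F.zero_mem, by simp⟩
  unfold lambdaK
  refine le_trans (csInf_le ?_ ⟨F, hF, hsm, rfl⟩) (csSup_le ⟨0, hzero F⟩ ?_)
  · refine ⟨0, ?_⟩
    rintro r ⟨F', -, -, rfl⟩
    exact Real.sSup_nonneg' ⟨0, hzero F', le_rfl⟩
  · rintro s ⟨φ, hφ, rfl⟩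
    exact ht φ hφ

variable [OpensMeasurableSpace M]

theorem lambdaK_lt_one_of_pairwise_disjoint_tsupport {k : ℕ} {φ : Fin (k + 1) → M → ℝ}
    (hsm : ∀ i, SmoothFn m (φ i)) (hneg : ∀ i, Qform vol μ gInv (φ i) < 0)
    (hdisj : Pairwise (Disjoint on fun i => tsupport (φ i))) :
    lambdaK vol gInv k μ < 1 := by
  obtain ⟨t, ht0, ht1, hAB⟩ := exists_lt_one_forall_le_mul
    (fun i => integral_nonneg fun x => sq_nonneg (φ i x)) fun i => sub_neg.1 (hneg i)
  have hne : ∀ i, φ i ≠ 0 := fun i h => (hneg i).ne' (by rw [h, Qform_zero])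
  refine (lambdaK_le_of_finrank_eq (Submodule.span ℝ (range φ)) ?_ ?_ ?_).trans_lt ht1
  · rw [finrank_span_eq_card (linearIndependent_of_pairwise_disjoint_tsupport hne hdisj),
      Fintype.card_fin]
  · exact fun ψ => SmoothFn.of_mem_span (by rintro _ ⟨i, rfl⟩; exact hsm i)
  intro ψ hψ
  obtain ⟨c, rfl⟩ := (Submodule.mem_span_range_iff_exists_fun ℝ).1 hψ
  have hgrad : ∀ x, gradSqG gInv (∑ j, c j • φ j) x = ∑ j, c j ^ 2 * gradSqG gInv (φ j) x := by
    intro x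
    obtain ⟨i, hi⟩ := exists_forall_ne_notMem_tsupport hdisj x
    rw [gradSqG_congr gInv (sum_smul_eventuallyEq_of_forall_ne_notMem_tsupport c hi),
      gradSqG_const_smul gInv ((hsm i).mdifferentiableAt (by simp)),
      Finset.sum_eq_single_of_mem i (Finset.mem_univ i) fun j _ hj => by
        rw [gradSqG_eq_zero_of_notMem_tsupport gInv (hi j hj), mul_zero]]
  have hsq : ∀ x, (∑ j, c j • φ j) x ^ 2 = ∑ j, c j ^ 2 * φ j x ^ 2 := by
    intro x
    obtain ⟨i, hi⟩ := exists_forall_ne_notMem_tsupport hdisj x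
    rw [(sum_smul_eventuallyEq_of_forall_ne_notMem_tsupport c hi).eq_of_nhds,
      Finset.sum_eq_single_of_mem i (Finset.mem_univ i) fun j _ hj => by
        rw [image_eq_zero_of_notMem_tsupport (hi j hj), zero_pow two_ne_zero, mul_zero],
      Pi.smul_apply, smul_eq_mul, mul_pow]
  simp only [hgrad, hsq]
  refine integral_sum_div_integral_sum_le (fun i => (isClosed_tsupport (φ i)).measurableSet)
    hdisj (fun i x hx => ?_) (fun i x hx => ?_) (fun i x => by positivity) ht0 fun i => ?_
  · rw [gradSqG_eq_zero_of_notMem_tsupport gInv hx, mul_zero]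
  · rw [image_eq_zero_of_notMem_tsupport hx, zero_pow two_ne_zero, mul_zero]
  · rw [integral_const_mul, integral_const_mul, mul_left_comm]
    exact mul_le_mul_of_nonneg_left (hAB i) (sq_nonneg _)

theorem lambdaK_lt_one_of_pairwise_disjoint_not_indexZero {k : ℕ} {U : Fin (k + 1) → Set M}
    (hU : Pairwise (Disjoint on U)) (hneg : ∀ i, ¬IndexZero vol μ gInv (U i)) :
    lambdaK vol gInv k μ < 1 := by
  simp only [IndexZero, not_forall, not_le, exists_prop] at hneg
  choose φ hsm hsupp hQ using hneg
  exact lambdaK_lt_one_of_pairwise_disjoint_tsupport hsm hQ fun i j hij =>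
    (hU hij).mono (hsupp i) (hsupp j)

end Rayleigh

theorem unstable_point_annulus_index_zero_general {m : ℕ} {M : Type*} [MetricSpace M]
    [ChartedSpace (Euc m) M] [MeasurableSpace M] [BorelSpace M]
    (vol : Measure M) (gInv : M → Euc m →L[ℝ] Euc m) (μs : ℕ → Measure M)
    (k : ℕ) (hlam : ∀ n, lambdaK vol gInv k (μs n) = 1)
    (p : M) :
    ∃ ψ : ℕ → ℕ, StrictMono ψ ∧ ∃ Ω : Set M, IsOpen Ω ∧ p ∈ Ω ∧
      ∃ r : ℕ → ℝ, (∀ j, 0 < r j) ∧ Tendsto r atTop (𝓝 0) ∧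
        ∀ j, IndexZero vol (μs (ψ j)) gInv (Ω \ closure (Metric.ball p (r j))) := by
  by_contra hcon
  have hstep : ∀ s > 0, ∃ s' > 0, ∀ᶠ n in atTop,
      ¬IndexZero vol (μs n) gInv (ball p s \ closure (ball p s')) := by
    intro s hs
    by_contra! hfreq
    obtain ⟨ψ, hψ, r, hr0, hr, hψr⟩ := exists_strictMono_tendsto_zero_of_frequently hfreq
    exact hcon ⟨ψ, hψ, ball p s, isOpen_ball, mem_ball_self hs, r, hr0, hr, hψr⟩
  obtain ⟨U, hU, hev⟩ := exists_pairwise_disjoint_eventually_of_annuli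
    (P := fun n U => ¬IndexZero vol (μs n) gInv U)
    (fun n _ _ hUV hn h => hn (h.mono hUV)) p hstep (k + 1)
  obtain ⟨n, hn⟩ := hev.exists
  exact (lambdaK_lt_one_of_pairwise_disjoint_not_indexZero hU hn).ne (hlam n)

theorem unstable_point_annulus_index_zero {m : ℕ} {M : Type*} [MetricSpace M]
    [ChartedSpace (Euc m) M] [IsManifold (𝓡 m) (⊤ : ℕ∞) M]
    [CompactSpace M] [MeasurableSpace M] [BorelSpace M]
    (vol : Measure M) [IsFiniteMeasure vol]
    (gInv : M → Euc m →L[ℝ] Euc m)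
    (μs : ℕ → Measure M) [∀ n, IsFiniteMeasure (μs n)]
    (k : ℕ) (hlam : ∀ n, lambdaK vol gInv k (μs n) = 1)
    (p : M) (hp : ¬ StablePt vol gInv μs p) :
    ∃ ψ : ℕ → ℕ, StrictMono ψ ∧ ∃ Ω : Set M, IsOpen Ω ∧ p ∈ Ω ∧
      ∃ r : ℕ → ℝ, (∀ j, 0 < r j) ∧ Tendsto r atTop (𝓝 0) ∧
        ∀ j, IndexZero vol (μs (ψ j)) gInv (Ω \ closure (Metric.ball p (r j))) :=
  unstable_point_annulus_index_zero_general vol gInv μs k hlam p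
end
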